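/- arXiv:2103.07004 — 3 statements merged into one kernel-verified Lean document; each statement's English description precedes it below -/
import Mathlib

section
/- Let α be an infinite limit ordinal and Y = [0, α] (the ordinal α+1) with the order topology. Suppose {f_j}_{j ∈ J} is a net of homeomorphisms of Y such that for every ξ < α there exists j₀ ∈ J with f_j restricted to [0, ξ] equal to the identity for all j ≥ j₀. Then f_j converges uniformly to the identity of Y, i.e., for every entourage U of the diagonal in Y × Y (with respect to the unique compatible uniformity on the compact space Y) there is j₀ such that (f_j(x), x) ∈ U for all x ∈ Y and j ≥ j₀. -/
open Set Filter Topology Function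

section LinearOrder

variable {X : Type*} [LinearOrder X]

theorem Function.Injective.mapsTo_Ioi_of_eqOn_Iic {g : X → X} (hg : Injective g) {l : X}
    (hfix : EqOn g id (Iic l)) : MapsTo g (Ioi l) (Ioi l) := by
  intro x hx
  refine lt_of_not_ge fun hgx => ?_
  have hgx_eq : g x = x := hg (hfix hgx)
  exact (hgx_eq ▸ hgx).not_gt hx

variable [OrderTop X] [TopologicalSpace X] [OrderTopology X]

theorem exists_Ioi_prod_Ioi_subset_of_mem_nhds_top [Nontrivial X] {U : Set (X × X)}
    (hU : U ∈ 𝓝 (⊤, ⊤)) : ∃ l < ⊤, Ioi l ×ˢ Ioi l ⊆ U := by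
  rw [nhds_prod_eq] at hU
  exact (nhds_top_basis.prod_self).mem_iff.1 hU

/-- Injectivity keeps the points above `l` above `l`, where they are close to `⊤` together with
their images. -/
theorem eventually_forall_mem_of_eventually_eqOn_Iic {J : Type*} {L : Filter J} {f : J → X → X}
    (hinj : ∀ j, Injective (f j)) (hf : ∀ l < ⊤, ∀ᶠ j in L, EqOn (f j) id (Iic l))
    {U : Set (X × X)} (hU : U ∈ 𝓝ˢ (diagonal X)) : ∀ᶠ j in L, ∀ x, (f j x, x) ∈ U := by
  have hdiag : diagonal X ⊆ U := subset_of_mem_nhdsSet hU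
  rcases subsingleton_or_nontrivial X with hX | hX
  · exact Eventually.of_forall fun j x => hdiag (Subsingleton.elim (f j x) x)
  obtain ⟨l, hl, hlU⟩ :=
    exists_Ioi_prod_Ioi_subset_of_mem_nhds_top (nhds_le_nhdsSet (mem_diagonal ⊤) hU)
  filter_upwards [hf l hl] with j hj x
  rcases le_or_gt x l with hx | hx
  · rw [hj hx]
    exact hdiag rfl
  · exact hlU ⟨(hinj j).mapsTo_Ioi_of_eqOn_Iic hj hx, hx⟩

end LinearOrder

theorem stmt3_general (α : Ordinal)
    {J : Type*} [SemilatticeSup J] [Nonempty J]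
    (f : J → (Set.Iic α ≃ₜ Set.Iic α))
    (hf : ∀ ξ < α, ∃ j₀ : J, ∀ j ≥ j₀, ∀ x : Set.Iic α, (x : Ordinal) ≤ ξ → f j x = x) :
    ∀ U ∈ nhdsSet (Set.diagonal (Set.Iic α)),
      ∃ j₀ : J, ∀ j ≥ j₀, ∀ x : Set.Iic α, (f j x, x) ∈ U := by
  intro U hU
  refine eventually_atTop.1 <|
    eventually_forall_mem_of_eventually_eqOn_Iic (fun j => (f j).injective) (fun l hl => ?_) hU
  obtain ⟨j₀, hj₀⟩ := hf l hl
  exact eventually_atTop.2 ⟨j₀, fun j hj x hx => hj₀ j hj x hx⟩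

theorem stmt3 (α : Ordinal) (hα : Order.IsSuccLimit α)
    {J : Type*} [SemilatticeSup J] [Nonempty J]
    (f : J → (Set.Iic α ≃ₜ Set.Iic α))
    (hf : ∀ ξ < α, ∃ j₀ : J, ∀ j ≥ j₀, ∀ x : Set.Iic α, (x : Ordinal) ≤ ξ → f j x = x) :
    ∀ U ∈ nhdsSet (Set.diagonal (Set.Iic α)),
      ∃ j₀ : J, ∀ j ≥ j₀, ∀ x : Set.Iic α, (f j x, x) ∈ U :=
  stmt3_general α f hf
end

section
/- Let α be an infinite limit ordinal of countable cofinality and Y = α+1 with the order topology. Then the homeomorphism group Homeo(Y), with the topology of uniform convergence, contains a countably infinite subset that is not closed; specifically, there is a sequence of transpositions of pairs of isolated points converging to the identity but never equal to the identity. -/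
/-!
The points `a + 1` and `a + 2` of `[0, α]` are isolated, so swapping them is a homeomorphism.
Since `cof α = ℵ₀` there is a strictly increasing sequence `aₙ → α`; the transpositions of
`aₙ + 1` and `aₙ + 2` are then pairwise distinct, and they converge uniformly to the identity
because each one moves only two points, both of which tend to the top point `α`.
-/

open Ordinal Cardinal

/-- A homeomorphism of `[0, α]` that transposes the two isolated points `a + 1` and `a + 2`
(for some `a < α`) and fixes every other point. -/
def IsTransposition {α : Ordinal} (f : Set.Iic α ≃ₜ Set.Iic α) : Prop :=
  ∃ a < α, ∀ x : Set.Iic α,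
    (f x : Ordinal) = if (x : Ordinal) = a + 1 then a + 2
      else if (x : Ordinal) = a + 2 then a + 1 else (x : Ordinal)

open Filter Topology Set Order

section SwapIsolated

variable {X : Type*} [TopologicalSpace X] [DecidableEq X]

theorem continuous_swap_of_isOpen_singleton [T1Space X] {p q : X} (hp : IsOpen {p})
    (hq : IsOpen {q}) : Continuous (Equiv.swap p q) := by
  refine continuous_iff_continuousAt.2 fun x => ?_
  by_cases hxp : x = p
  · subst hxp
    refine (continuousAt_const (y := q)).congr (eventually_of_mem (hp.mem_nhds rfl) fun y hy => ?_)
    rw [mem_singleton_iff.1 hy, Equiv.swap_apply_left]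
  by_cases hxq : x = q
  · subst hxq
    refine (continuousAt_const (y := p)).congr (eventually_of_mem (hq.mem_nhds rfl) fun y hy => ?_)
    rw [mem_singleton_iff.1 hy, Equiv.swap_apply_right]
  have hx : ({p, q}ᶜ : Set X) ∈ 𝓝 x :=
    (Set.toFinite {p, q}).isClosed.isOpen_compl.mem_nhds (by simp [hxp, hxq])
  refine continuousAt_id.congr (eventually_of_mem hx fun y hy => ?_)
  simp only [mem_compl_iff, mem_insert_iff, mem_singleton_iff, not_or] at hy
  exact (Equiv.swap_apply_of_ne_of_ne hy.1 hy.2).symm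

def Homeomorph.swapOfIsOpen [T1Space X] {p q : X} (hp : IsOpen {p}) (hq : IsOpen {q}) :
    X ≃ₜ X where
  toEquiv := Equiv.swap p q
  continuous_toFun := continuous_swap_of_isOpen_singleton hp hq
  continuous_invFun := continuous_swap_of_isOpen_singleton hp hq

@[simp]
theorem Homeomorph.coe_swapOfIsOpen [T1Space X] {p q : X} (hp : IsOpen {p}) (hq : IsOpen {q}) :
    ⇑(Homeomorph.swapOfIsOpen hp hq) = Equiv.swap p q := rfl

theorem eventually_swap_apply_mem_of_tendsto {ι : Type*} {l : Filter ι} {p q : ι → X} {z : X}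
    (hp : Tendsto p l (𝓝 z)) (hq : Tendsto q l (𝓝 z)) {U : Set (X × X)}
    (hU : U ∈ 𝓝ˢ (diagonal X)) : ∀ᶠ i in l, ∀ x, (Equiv.swap (p i) (q i) x, x) ∈ U := by
  have hUz : U ∈ 𝓝 (z, z) := nhds_le_nhdsSet (mem_diagonal z) hU
  filter_upwards [hq.prodMk_nhds hp hUz, hp.prodMk_nhds hq hUz] with i hqp hpq x
  rw [Equiv.swap_apply_def]
  split_ifs with hxp hxq
  · exact hxp ▸ hqp
  · exact hxq ▸ hpq
  · exact subset_of_mem_nhdsSet hU rfl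

end SwapIsolated

theorem tendsto_nhds_top_Iic_of_le {X ι : Type*} [LinearOrder X] [TopologicalSpace X]
    [OrderTopology X] {z : X} {l : Filter ι} {a : ι → X} (ha : Tendsto a l (𝓝 z))
    {p : ι → Iic z} (hp : ∀ i, a i ≤ p i) : Tendsto p l (𝓝 ⊤) :=
  tendsto_subtype_rng.2 <|
    tendsto_of_tendsto_of_tendsto_of_le_of_le ha tendsto_const_nhds hp fun i => (p i).2

theorem isOpen_singleton_subtype_of_not_isSuccLimit {X : Type*} [LinearOrder X]
    [TopologicalSpace X] [OrderTopology X] [SuccOrder X] [NoMaxOrder X] {s : Set X} {x : s}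
    (hx : ¬IsSuccLimit x.1) : IsOpen {x} := by
  rw [← Subtype.val_injective.preimage_image {x}, image_singleton]
  exact (SuccOrder.isOpen_singleton_iff.2 hx).preimage continuous_subtype_val

namespace Ordinal

theorem exists_strictMono_tendsto_of_cof_eq_aleph0 {α : Ordinal} (h : α.cof = ℵ₀) :
    ∃ a : ℕ → Ordinal, StrictMono a ∧ (∀ n, a n < α) ∧ Tendsto a atTop (𝓝 α) := by
  obtain ⟨f, hf⟩ := exists_isFundamentalSeq (a := ω) (by rw [h, ord_aleph0])
  set a : ℕ → Ordinal := fun n => f ⟨n, natCast_lt_omega0 n⟩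
  have ha_mono : StrictMono a := fun m n hmn =>
    hf.strictMono (Subtype.mk_lt_mk.2 (Nat.cast_lt.2 hmn))
  refine ⟨a, ha_mono, fun n => (f _).2, tendsto_order.2 ⟨fun b hb => ?_, fun b hb =>
    Eventually.of_forall fun n => (f _).2.trans hb⟩⟩
  obtain ⟨_, ⟨c, rfl⟩, hbc⟩ := hf.isCofinal_range ⟨b, hb⟩
  obtain ⟨N, hN⟩ := lt_omega0.1 c.2
  obtain rfl : c = ⟨N, natCast_lt_omega0 N⟩ := Subtype.ext hN
  exact eventually_atTop.2 ⟨N + 1, fun n hn => (hbc : b ≤ a N).trans_lt (ha_mono (by omega))⟩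

section Transposition

variable {α : Ordinal} (hα : IsSuccLimit α) {a : Ordinal} (ha : a < α)

noncomputable def iicTransposition : Iic α ≃ₜ Iic α :=
  Homeomorph.swapOfIsOpen (p := ⟨a + 1, (hα.add_one_lt ha).le⟩)
    (q := ⟨a + 2, by simpa using (hα.add_natCast_lt ha 2).le⟩)
    (isOpen_singleton_subtype_of_not_isSuccLimit (not_isSuccLimit_add_one a))
    (isOpen_singleton_subtype_of_not_isSuccLimit (by
      show ¬IsSuccLimit (a + 2)
      rw [← one_add_one_eq_two, ← add_assoc]
      exact not_isSuccLimit_add_one _))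

theorem iicTransposition_apply (x : Iic α) :
    (iicTransposition hα ha x : Ordinal) = if (x : Ordinal) = a + 1 then a + 2
      else if (x : Ordinal) = a + 2 then a + 1 else (x : Ordinal) := by
  simp only [iicTransposition, Homeomorph.coe_swapOfIsOpen, Equiv.swap_apply_def,
    Subtype.ext_iff]
  split_ifs <;> rfl

theorem isTransposition_iicTransposition : IsTransposition (iicTransposition hα ha) :=
  ⟨a, ha, iicTransposition_apply hα ha⟩

theorem iicTransposition_ne_refl : iicTransposition hα ha ≠ Homeomorph.refl (Iic α) := by
  intro h
  have hx := iicTransposition_apply hα ha ⟨a + 1, (hα.add_one_lt ha).le⟩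
  simp only [h, Homeomorph.refl_apply, ↓reduceIte] at hx
  exact (add_lt_add_right _root_.one_lt_two a).ne hx

theorem iicTransposition_ne_of_lt {b : Ordinal} (hb : b < α) (hab : a < b) :
    iicTransposition hα ha ≠ iicTransposition hα hb := by
  intro h
  have hx := congrArg (fun f => (f ⟨a + 1, (hα.add_one_lt ha).le⟩ : Ordinal)) h
  have h1 : a + 1 < b + 1 := by simpa
  have h2 : b + 1 < b + 2 := by simp
  simp only [iicTransposition_apply, h1.ne, (h1.trans h2).ne, ↓reduceIte] at hx
  exact (add_lt_add_right _root_.one_lt_two a).ne' hx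

theorem injective_iicTransposition_of_strictMono {ι : Type*} [LinearOrder ι] {a : ι → Ordinal}
    (ha_mono : StrictMono a) (ha : ∀ i, a i < α) :
    Function.Injective fun i => iicTransposition hα (ha i) := by
  intro i j h
  by_contra hij
  rcases Ne.lt_or_gt hij with hlt | hlt
  · exact iicTransposition_ne_of_lt hα _ _ (ha_mono hlt) h
  · exact iicTransposition_ne_of_lt hα _ _ (ha_mono hlt) h.symm

theorem eventually_iicTransposition_apply_mem {ι : Type*} {l : Filter ι} {a : ι → Ordinal}
    (ha : ∀ i, a i < α) (hlim : Tendsto a l (𝓝 α)) {U : Set (Iic α × Iic α)}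
    (hU : U ∈ 𝓝ˢ (diagonal (Iic α))) : ∀ᶠ i in l, ∀ x, (iicTransposition hα (ha i) x, x) ∈ U :=
  eventually_swap_apply_mem_of_tendsto (tendsto_nhds_top_Iic_of_le hlim fun _ => le_self_add)
    (tendsto_nhds_top_Iic_of_le hlim fun _ => le_self_add) hU

end Transposition

end Ordinal

theorem stmt4 (α : Ordinal) (hα : Order.IsSuccLimit α) (hcof : α.cof = ℵ₀) :
    ∃ f : ℕ → (Set.Iic α ≃ₜ Set.Iic α),
      Function.Injective f ∧
      (∀ n, IsTransposition (f n)) ∧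
      (∀ n, f n ≠ Homeomorph.refl (Set.Iic α)) ∧
      (∀ U ∈ nhdsSet (Set.diagonal (Set.Iic α)),
        ∃ N : ℕ, ∀ n ≥ N, ∀ x : Set.Iic α, (f n x, x) ∈ U) := by
  obtain ⟨a, ha_mono, ha_lt, ha_lim⟩ := exists_strictMono_tendsto_of_cof_eq_aleph0 hcof
  exact ⟨fun n => iicTransposition hα (ha_lt n),
    injective_iicTransposition_of_strictMono hα ha_mono ha_lt,
    fun n => isTransposition_iicTransposition hα (ha_lt n),
    fun n => iicTransposition_ne_refl hα (ha_lt n),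
    fun U hU =>
      eventually_atTop.1 (eventually_iicTransposition_apply_mem hα ha_lt ha_lim hU)⟩
end

section
/- Let δ < β be ordinals and let φ : ℕ → ℕ be a bijection. Define f on [0, ω^β] by: f(ω^(δ+1)·ε + ω^δ·m + η) = ω^(δ+1)·ε + ω^δ·φ(m) + η if η > 0; f(ω^(δ+1)·ε + ω^δ·m) = ω^(δ+1)·ε + ω^δ·(φ(m−1)+1) if m > 0; f(ω^(δ+1)·ε) = ω^(δ+1)·ε; and f(ω^β) = ω^β. Then f is a homeomorphism of [0, ω^β] with the order topology. -/
open Ordinal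

private lemma opow_succ_eq (δ : Ordinal) : ω ^ (δ + 1) = ω ^ δ * ω := by
  rw [opow_add, opow_one]

private lemma Wne (δ : Ordinal) : (ω : Ordinal) ^ δ ≠ 0 :=
  opow_ne_zero δ omega0_ne_zero

private lemma Wpos (δ : Ordinal) : (0 : Ordinal) < ω ^ δ :=
  opow_pos δ omega0_pos

private lemma Apos (δ : Ordinal) : (0 : Ordinal) < ω ^ (δ + 1) :=
  opow_pos _ omega0_pos

private lemma rep_ex (δ x : Ordinal) :
    ∃ (e : Ordinal) (m : ℕ) (η : Ordinal), η < ω ^ δ ∧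
      x = ω ^ (δ + 1) * e + ω ^ δ * m + η := by
  obtain ⟨m, hm⟩ := Ordinal.lt_omega0.1 (Ordinal.mod_lt (x / ω ^ δ) Ordinal.omega0_ne_zero)
  refine ⟨x / ω ^ δ / ω, m, x % ω ^ δ, Ordinal.mod_lt x (Wne δ), ?_⟩
  rw [opow_succ_eq, mul_assoc, ← mul_add, ← hm, Ordinal.div_add_mod, Ordinal.div_add_mod]

private lemma rep_div_mod (δ e : Ordinal) (m : ℕ) {η : Ordinal} (hη : η < ω ^ δ) :
    (ω ^ (δ + 1) * e + ω ^ δ * m + η) / ω ^ δ = ω * e + m ∧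
    (ω ^ (δ + 1) * e + ω ^ δ * m + η) % ω ^ δ = η := by
  have hx : ω ^ (δ + 1) * e + ω ^ δ * m + η = ω ^ δ * (ω * e + m) + η := by
    rw [opow_succ_eq, mul_assoc, mul_add]
  constructor
  · rw [hx, Ordinal.mul_add_div _ (Wne δ), Ordinal.div_eq_zero_of_lt hη, add_zero]
  · rw [hx, Ordinal.mul_add_mod_self, Ordinal.mod_eq_of_lt hη]

private lemma rep_uniq {δ e e' : Ordinal} {m m' : ℕ} {η η' : Ordinal}
    (hη : η < ω ^ δ) (hη' : η' < ω ^ δ)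
    (h : ω ^ (δ + 1) * e + ω ^ δ * m + η = ω ^ (δ + 1) * e' + ω ^ δ * m' + η') :
    e = e' ∧ m = m' ∧ η = η' := by
  have hq : ω * e + (m : Ordinal) = ω * e' + m' := by
    rw [← (rep_div_mod δ e m hη).1, ← (rep_div_mod δ e' m' hη').1, h]
  have hηη : η = η' := by
    rw [← (rep_div_mod δ e m hη).2, ← (rep_div_mod δ e' m' hη').2, h]
  have hm : m = m' := by
    have h2 := congrArg (· % ω) hq
    simp only [Ordinal.mul_add_mod_self, Ordinal.mod_eq_of_lt (nat_lt_omega0 _)] at h2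
    exact_mod_cast h2
  have he : e = e' := by
    have := congrArg (· / ω) hq
    simpa [Ordinal.mul_add_div _ Ordinal.omega0_ne_zero,
      Ordinal.div_eq_zero_of_lt (nat_lt_omega0 _)] using this
  exact ⟨he, hm, hηη⟩

private lemma rep_lt (δ e : Ordinal) (m : ℕ) {η : Ordinal} (hη : η < ω ^ δ) :
    ω ^ (δ + 1) * e + ω ^ δ * m + η < ω ^ (δ + 1) * (e + 1) := by
  rw [mul_add_one, opow_succ_eq, add_assoc]
  refine add_lt_add_right ?_ _
  calc ω ^ δ * m + η < ω ^ δ * m + ω ^ δ := add_lt_add_right hη _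
    _ = ω ^ δ * ((m : Ordinal) + 1) := (mul_add_one _ _).symm
    _ ≤ ω ^ δ * ω := by
        refine (mul_le_mul_iff_right₀ (Wpos δ)).2 ?_
        exact_mod_cast (nat_lt_omega0 (m + 1)).le

private lemma rep_le_self (δ e : Ordinal) (m : ℕ) (η : Ordinal) :
    ω ^ (δ + 1) * e ≤ ω ^ (δ + 1) * e + ω ^ δ * m + η := by
  rw [add_assoc]; exact le_self_add

private lemma block_le {β δ : Ordinal} (hδ : δ < β) {e : Ordinal}
    (he : ω ^ (δ + 1) * e < ω ^ β) : ω ^ (δ + 1) * (e + 1) ≤ ω ^ β := by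
  have hβ1 : δ + 1 ≤ β := by
    rw [Ordinal.add_one_eq_succ, Order.succ_le_iff]; exact hδ
  have hωβ : ω ^ (δ + 1) * ω ^ (β - (δ + 1)) = ω ^ β := by
    rw [← opow_add, Ordinal.add_sub_cancel_of_le hβ1]
  rw [← hωβ] at he ⊢
  rw [mul_le_mul_iff_right₀ (Apos δ)]
  rw [mul_lt_mul_iff_right₀ (Apos δ)] at he
  rwa [Ordinal.add_one_eq_succ, Order.succ_le_iff]

theorem stmt6 (β δ : Ordinal) (hδ : δ < β) (φ : ℕ ≃ ℕ)
    (f : Ordinal → Ordinal)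
    (h1 : ∀ (ε : Ordinal) (m : ℕ) (η : Ordinal), 0 < η → η < ω ^ δ →
      ω ^ (δ + 1) * ε + ω ^ δ * (m : Ordinal) + η ≤ ω ^ β →
      f (ω ^ (δ + 1) * ε + ω ^ δ * (m : Ordinal) + η)
        = ω ^ (δ + 1) * ε + ω ^ δ * (φ m : Ordinal) + η)
    (h2 : ∀ (ε : Ordinal) (m : ℕ), 0 < m →
      ω ^ (δ + 1) * ε + ω ^ δ * (m : Ordinal) ≤ ω ^ β →
      f (ω ^ (δ + 1) * ε + ω ^ δ * (m : Ordinal))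
        = ω ^ (δ + 1) * ε + ω ^ δ * ((φ (m - 1) : Ordinal) + 1))
    (h3 : ∀ ε : Ordinal, ω ^ (δ + 1) * ε ≤ ω ^ β →
      f (ω ^ (δ + 1) * ε) = ω ^ (δ + 1) * ε)
    (h4 : f (ω ^ β) = ω ^ β) :
    ∃ h : Set.Iic (ω ^ β) ≃ₜ Set.Iic (ω ^ β),
      ∀ x : Set.Iic (ω ^ β), (h x : Ordinal) = f (x : Ordinal) := by
  classical
  set K : ℕ → Ordinal → ℕ :=
    fun m η => if η = 0 then (if m = 0 then 0 else φ (m - 1) + 1) else φ m with hK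
  -- evaluation of f via the representation
  have hf : ∀ (e : Ordinal) (m : ℕ) (η : Ordinal), η < ω ^ δ →
      ω ^ (δ + 1) * e + ω ^ δ * m + η ≤ ω ^ β →
      f (ω ^ (δ + 1) * e + ω ^ δ * m + η) = ω ^ (δ + 1) * e + ω ^ δ * (K m η) + η := by
    intro e m η hη hle
    by_cases h0 : η = 0
    · subst h0
      by_cases hm : m = 0
      · subst hm
        simp only [Nat.cast_zero, mul_zero, add_zero] at hle ⊢
        rw [h3 e hle]
        simp [hK]
      · rw [add_zero] at hle ⊢
        rw [h2 e m (Nat.pos_of_ne_zero hm) hle]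
        have : (K m 0 : Ordinal) = (φ (m - 1) : Ordinal) + 1 := by
          rw [hK]; simp [hm]
        rw [this, add_zero]
    · have : K m η = φ m := by rw [hK]; simp [h0]
      rw [this]
      exact h1 e m η (pos_iff_ne_zero.2 h0) hη hle
  -- f maps Iic into Iic
  have hmem : ∀ x : Ordinal, x ≤ ω ^ β → f x ≤ ω ^ β := by
    intro x hx
    rcases hx.lt_or_eq with hlt | rfl
    · obtain ⟨e, m, η, hη, rfl⟩ := rep_ex δ x
      rw [hf e m η hη hlt.le]
      exact (rep_lt δ e _ hη).le.trans
        (block_le hδ (lt_of_le_of_lt (rep_le_self δ e m η) hlt))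
    · rw [h4]
  -- the total extension F
  set F : Ordinal → Ordinal := fun y => if y ≤ ω ^ β then f y else y with hFdef
  have hFeq : ∀ {y : Ordinal}, y ≤ ω ^ β → F y = f y := fun hy => if_pos hy
  have hFmem : ∀ y : Ordinal, y ≤ ω ^ β → F y ≤ ω ^ β := fun y hy => by
    rw [hFeq hy]; exact hmem y hy
  -- injectivity of K in m
  have hKinj : ∀ (m m' : ℕ) (η : Ordinal), K m η = K m' η → m = m' := by
    intro m m' η h
    by_cases h0 : η = 0
    · rw [hK] at h; simp only [if_pos h0] at h
      by_cases hm : m = 0 <;> by_cases hm' : m' = 0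
      · omega
      · rw [if_pos hm, if_neg hm'] at h; omega
      · rw [if_neg hm, if_pos hm'] at h; omega
      · rw [if_neg hm, if_neg hm'] at h
        have := φ.injective (Nat.add_right_cancel h)
        omega
    · rw [hK] at h; simp only [if_neg h0] at h
      exact φ.injective h
  -- injectivity of f on Iic
  have hinj : ∀ x x' : Ordinal, x ≤ ω ^ β → x' ≤ ω ^ β → f x = f x' → x = x' := by
    intro x x' hx hx' hEq
    obtain ⟨e, m, η, hη, rfl⟩ := rep_ex δ x
    obtain ⟨e', m', η', hη', rfl⟩ := rep_ex δ x'
    rw [hf e m η hη hx, hf e' m' η' hη' hx'] at hEq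
    obtain ⟨he, hk, hη2⟩ := rep_uniq hη hη' hEq
    subst he; subst hη2
    rw [hKinj m m' η hk]
  -- surjectivity of f on Iic
  have hsurj : ∀ y : Ordinal, y ≤ ω ^ β → ∃ x, x ≤ ω ^ β ∧ f x = y := by
    intro y hy
    obtain ⟨e, n, η, hη, rfl⟩ := rep_ex δ y
    set m : ℕ := if η = 0 then (if n = 0 then 0 else φ.symm (n - 1) + 1) else φ.symm n with hm
    have hKm : K m η = n := by
      by_cases h0 : η = 0
      · by_cases hn : n = 0
        · simp [hK, hm, h0, hn]
        · have hm' : m = φ.symm (n - 1) + 1 := by rw [hm, if_pos h0, if_neg hn]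
          rw [hK]; simp only [if_pos h0, hm']
          simp only [Nat.add_sub_cancel, Nat.succ_ne_zero, if_false]
          rw [Equiv.apply_symm_apply]
          omega
      · have hm' : m = φ.symm n := by rw [hm, if_neg h0]
        rw [hK]; simp only [if_neg h0, hm', Equiv.apply_symm_apply]
    have hx : ω ^ (δ + 1) * e + ω ^ δ * m + η ≤ ω ^ β := by
      rcases (le_trans (rep_le_self δ e n η) hy).lt_or_eq with hlt | heq
      · exact (rep_lt δ e _ hη).le.trans (block_le hδ hlt)
      · have hy' := hy
        rw [add_assoc, ← heq] at hy'
        have hb : ω ^ δ * n + η = 0 := by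
          have h9 := (add_le_add_iff_left (ω ^ (δ + 1) * e)).1
            (by simpa using hy' : ω ^ (δ + 1) * e + (ω ^ δ * n + η) ≤ ω ^ (δ + 1) * e + 0)
          exact le_antisymm h9 (zero_le)
        obtain ⟨hn0, hη0⟩ := Ordinal.add_eq_zero_iff.1 hb
        have hn : n = 0 := by
          have := (mul_eq_zero.1 hn0).resolve_left (Wne δ)
          exact_mod_cast this
        have hm0 : m = 0 := by rw [hm, if_pos hη0, if_pos hn]
        rw [hm0, hη0, heq]; simp
    refine ⟨_, hx, ?_⟩
    rw [hf e m η hη hx, hKm]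
  have hlt1 : ∀ z : Ordinal, z < z + 1 := fun z => by
    simpa using (add_lt_add_right zero_lt_one z)
  have hle1 : ∀ {y z : Ordinal}, y < z + 1 → y ≤ z := by
    intro y z h; rwa [Ordinal.add_one_eq_succ, Order.lt_succ_iff] at h
  have hyrep : ∀ y : Ordinal, y ≤ ω ^ β → ∃ (e : Ordinal) (m : ℕ) (η : Ordinal),
      η < ω ^ δ ∧ y = ω ^ (δ + 1) * e + ω ^ δ * m + η ∧
      F y = ω ^ (δ + 1) * e + ω ^ δ * (K m η) + η := by
    intro y hy
    obtain ⟨e, m, η, hη, rfl⟩ := rep_ex δ y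
    exact ⟨e, m, η, hη, rfl, by rw [hFeq hy, hf e m η hη hy]⟩
  have hcont : Continuous F := by
    rw [continuous_iff_continuousAt]
    intro x
    by_cases hx : x ≤ ω ^ β
    swap
    · have hmem' : Set.Ioi (ω ^ β) ∈ nhds x := isOpen_Ioi.mem_nhds (not_le.1 hx)
      have hEq : (id : Ordinal → Ordinal) =ᶠ[nhds x] F :=
        Filter.eventually_of_mem hmem' (fun y hy => (if_neg (not_le.2 hy)).symm)
      exact continuousAt_id.congr hEq
    obtain ⟨e, m, η, hη, hxeq, hFx⟩ := hyrep x hx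
    by_cases hη0 : η = 0
    swap
    · -- Case 1 : η ≠ 0
      have hCx : ω ^ (δ + 1) * e + ω ^ δ * m < x := by
        rw [hxeq]
        have := add_lt_add_right (pos_iff_ne_zero.2 hη0) (ω ^ (δ + 1) * e + ω ^ δ * m)
        simpa using this
      have hloc : ∀ y : Ordinal, ω ^ (δ + 1) * e + ω ^ δ * m < y → y ≤ x →
          F y = ω ^ (δ + 1) * e + ω ^ δ * (K m η) + (y - (ω ^ (δ + 1) * e + ω ^ δ * m)) ∧
          0 < y - (ω ^ (δ + 1) * e + ω ^ δ * m) ∧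
          y - (ω ^ (δ + 1) * e + ω ^ δ * m) ≤ η := by
        intro y hy1 hy2
        have hyC : y = ω ^ (δ + 1) * e + ω ^ δ * m + (y - (ω ^ (δ + 1) * e + ω ^ δ * m)) :=
          (Ordinal.add_sub_cancel_of_le hy1.le).symm
        have hle' : y - (ω ^ (δ + 1) * e + ω ^ δ * m) ≤ η := by
          have h7 := hy2
          rw [hxeq] at h7
          rw [hyC] at h7
          exact (add_le_add_iff_left _).1 h7
        have hpos : 0 < y - (ω ^ (δ + 1) * e + ω ^ δ * m) := by
          rcases eq_zero_or_pos (y - (ω ^ (δ + 1) * e + ω ^ δ * m)) with h8 | h8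
          · rw [h8, add_zero] at hyC; exact absurd hyC.symm hy1.ne
          · exact h8
        have hη'W : y - (ω ^ (δ + 1) * e + ω ^ δ * m) < ω ^ δ := lt_of_le_of_lt hle' hη
        have hyβ : y ≤ ω ^ β := hy2.trans hx
        have hk : K m (y - (ω ^ (δ + 1) * e + ω ^ δ * m)) = K m η := by
          rw [hK]; simp only []; rw [if_neg hpos.ne', if_neg hη0]
        refine ⟨?_, hpos, hle'⟩
        have h9 := hf e m (y - (ω ^ (δ + 1) * e + ω ^ δ * m)) hη'W (by rw [← hyC]; exact hyβ)
        rw [hk] at h9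
        rw [hFeq hyβ]
        conv_lhs => rw [hyC]
        exact h9
      rw [ContinuousAt, hFx, tendsto_order]
      constructor
      · intro d hd
        rcases lt_or_ge d (ω ^ (δ + 1) * e + ω ^ δ * (K m η)) with hdD | hDd
        · filter_upwards [Ioo_mem_nhds hCx (hlt1 x)] with y hy
          obtain ⟨hf1, hf2, hf3⟩ := hloc y hy.1 (hle1 hy.2)
          rw [hf1]
          exact lt_of_lt_of_le hdD (le_self_add)
        · have h7 : d = ω ^ (δ + 1) * e + ω ^ δ * (K m η) +
              (d - (ω ^ (δ + 1) * e + ω ^ δ * (K m η))) :=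
            (Ordinal.add_sub_cancel_of_le hDd).symm
          have hd' : d - (ω ^ (δ + 1) * e + ω ^ δ * (K m η)) < η := by
            rw [h7] at hd
            exact (add_lt_add_iff_left _).1 hd
          have ha : ω ^ (δ + 1) * e + ω ^ δ * m +
              (d - (ω ^ (δ + 1) * e + ω ^ δ * (K m η))) < x := by
            rw [hxeq]; exact add_lt_add_right hd' _
          filter_upwards [Ioo_mem_nhds ha (hlt1 x)] with y hy
          have hy1 : ω ^ (δ + 1) * e + ω ^ δ * m < y :=
            lt_of_le_of_lt (le_self_add) hy.1
          obtain ⟨hf1, hf2, hf3⟩ := hloc y hy1 (hle1 hy.2)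
          have h9 := hy.1
          rw [show y = ω ^ (δ + 1) * e + ω ^ δ * m + (y - (ω ^ (δ + 1) * e + ω ^ δ * m)) from
            (Ordinal.add_sub_cancel_of_le hy1.le).symm] at h9
          have h8 := (add_lt_add_iff_left (ω ^ (δ + 1) * e + ω ^ δ * m)).1 h9
          rw [hf1, h7]
          exact add_lt_add_right h8 _
      · intro u hu
        filter_upwards [Ioo_mem_nhds hCx (hlt1 x)] with y hy
        obtain ⟨hf1, hf2, hf3⟩ := hloc y hy.1 (hle1 hy.2)
        rw [hf1]
        exact lt_of_le_of_lt (add_le_add_right hf3 _) hu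
    · -- η = 0
      subst hη0
      rw [add_zero] at hxeq hFx
      by_cases hm0 : m = 0
      swap
      · -- Case 2 : m ≠ 0
        have hmul : ω ^ δ * (m : Ordinal) = ω ^ δ * ((m - 1 : ℕ) : Ordinal) + ω ^ δ := by
          rw [← mul_add_one]
          congr 1
          exact_mod_cast (by omega : m = (m - 1) + 1)
        have hxC : x = ω ^ (δ + 1) * e + ω ^ δ * ((m - 1 : ℕ) : Ordinal) + ω ^ δ := by
          rw [hxeq, hmul, ← add_assoc]
        have hk0 : K m 0 = φ (m - 1) + 1 := by simp only [hK]; simp [hm0]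
        have hmul2 : ω ^ δ * ((K m 0 : ℕ) : Ordinal)
            = ω ^ δ * ((φ (m - 1) : ℕ) : Ordinal) + ω ^ δ := by
          rw [hk0, ← mul_add_one]
          norm_cast
        have hFxC : F x = ω ^ (δ + 1) * e + ω ^ δ * ((φ (m - 1) : ℕ) : Ordinal) + ω ^ δ := by
          rw [hFx, hmul2, ← add_assoc]
        have hCx : ω ^ (δ + 1) * e + ω ^ δ * ((m - 1 : ℕ) : Ordinal) < x := by
          have h5 := add_lt_add_right (Wpos δ)
            (ω ^ (δ + 1) * e + ω ^ δ * ((m - 1 : ℕ) : Ordinal))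
          rw [hxC]
          simpa using h5
        have hloc : ∀ y : Ordinal, ω ^ (δ + 1) * e + ω ^ δ * ((m - 1 : ℕ) : Ordinal) < y →
            y < x →
            F y = ω ^ (δ + 1) * e + ω ^ δ * ((φ (m - 1) : ℕ) : Ordinal) +
              (y - (ω ^ (δ + 1) * e + ω ^ δ * ((m - 1 : ℕ) : Ordinal))) ∧
            0 < y - (ω ^ (δ + 1) * e + ω ^ δ * ((m - 1 : ℕ) : Ordinal)) ∧
            y - (ω ^ (δ + 1) * e + ω ^ δ * ((m - 1 : ℕ) : Ordinal)) < ω ^ δ := by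
          intro y hy1 hy2
          have hyC : y = ω ^ (δ + 1) * e + ω ^ δ * ((m - 1 : ℕ) : Ordinal) +
              (y - (ω ^ (δ + 1) * e + ω ^ δ * ((m - 1 : ℕ) : Ordinal))) :=
            (Ordinal.add_sub_cancel_of_le hy1.le).symm
          have hpos : 0 < y - (ω ^ (δ + 1) * e + ω ^ δ * ((m - 1 : ℕ) : Ordinal)) := by
            rcases eq_zero_or_pos
              (y - (ω ^ (δ + 1) * e + ω ^ δ * ((m - 1 : ℕ) : Ordinal))) with h8 | h8
            · rw [h8, add_zero] at hyC; exact absurd hyC.symm hy1.ne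
            · exact h8
          have hη'W : y - (ω ^ (δ + 1) * e + ω ^ δ * ((m - 1 : ℕ) : Ordinal)) < ω ^ δ := by
            have h7 := hy2
            rw [hxC] at h7
            rw [hyC] at h7
            exact (add_lt_add_iff_left _).1 h7
          have hyβ : y ≤ ω ^ β := hy2.le.trans hx
          have hk : K (m - 1) (y - (ω ^ (δ + 1) * e + ω ^ δ * ((m - 1 : ℕ) : Ordinal)))
              = φ (m - 1) := by
            simp only [hK]; rw [if_neg hpos.ne']
          refine ⟨?_, hpos, hη'W⟩
          have h9 := hf e (m - 1) (y - (ω ^ (δ + 1) * e + ω ^ δ * ((m - 1 : ℕ) : Ordinal)))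
            hη'W (by rw [← hyC]; exact hyβ)
          rw [hk] at h9
          rw [hFeq hyβ]
          conv_lhs => rw [hyC]
          exact h9
        rw [ContinuousAt, hFxC, tendsto_order]
        constructor
        · intro d hd
          rcases lt_or_ge d (ω ^ (δ + 1) * e + ω ^ δ * ((φ (m - 1) : ℕ) : Ordinal))
            with hdD | hDd
          · filter_upwards [Ioo_mem_nhds hCx (hlt1 x)] with y hy
            rcases (hle1 hy.2).lt_or_eq with hylt | heq
            · obtain ⟨hf1, hf2, hf3⟩ := hloc y hy.1 hylt
              rw [hf1]
              exact lt_of_lt_of_le hdD (le_self_add)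
            · rw [heq, hFxC]
              exact lt_of_lt_of_le hdD (le_self_add)
          · have h7 : d = ω ^ (δ + 1) * e + ω ^ δ * ((φ (m - 1) : ℕ) : Ordinal) +
                (d - (ω ^ (δ + 1) * e + ω ^ δ * ((φ (m - 1) : ℕ) : Ordinal))) :=
              (Ordinal.add_sub_cancel_of_le hDd).symm
            have hd' : d - (ω ^ (δ + 1) * e + ω ^ δ * ((φ (m - 1) : ℕ) : Ordinal)) < ω ^ δ := by
              rw [h7] at hd
              exact (add_lt_add_iff_left _).1 hd
            have ha : ω ^ (δ + 1) * e + ω ^ δ * ((m - 1 : ℕ) : Ordinal) +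
                (d - (ω ^ (δ + 1) * e + ω ^ δ * ((φ (m - 1) : ℕ) : Ordinal))) < x := by
              rw [hxC]; exact add_lt_add_right hd' _
            filter_upwards [Ioo_mem_nhds ha (hlt1 x)] with y hy
            have hy1 : ω ^ (δ + 1) * e + ω ^ δ * ((m - 1 : ℕ) : Ordinal) < y :=
              lt_of_le_of_lt (le_self_add) hy.1
            rcases (hle1 hy.2).lt_or_eq with hylt | heq
            · obtain ⟨hf1, hf2, hf3⟩ := hloc y hy1 hylt
              have h9 := hy.1
              rw [show y = ω ^ (δ + 1) * e + ω ^ δ * ((m - 1 : ℕ) : Ordinal) +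
                  (y - (ω ^ (δ + 1) * e + ω ^ δ * ((m - 1 : ℕ) : Ordinal))) from
                (Ordinal.add_sub_cancel_of_le hy1.le).symm] at h9
              have h8 := (add_lt_add_iff_left
                (ω ^ (δ + 1) * e + ω ^ δ * ((m - 1 : ℕ) : Ordinal))).1 h9
              rw [hf1, h7]
              exact add_lt_add_right h8 _
            · rw [heq, hFxC, h7]
              exact add_lt_add_right hd' _
        · intro u hu
          filter_upwards [Ioo_mem_nhds hCx (hlt1 x)] with y hy
          rcases (hle1 hy.2).lt_or_eq with hylt | heq
          · obtain ⟨hf1, hf2, hf3⟩ := hloc y hy.1 hylt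
            rw [hf1]
            exact lt_trans (add_lt_add_right hf3 _) hu
          · rw [heq, hFxC]
            exact hu
      · -- Case 3 : m = 0, η = 0
        subst hm0
        rw [Nat.cast_zero, mul_zero, add_zero] at hxeq
        have hK00 : K 0 0 = 0 := by simp [hK]
        rw [hK00, Nat.cast_zero, mul_zero, add_zero] at hFx
        rw [ContinuousAt, hFx, tendsto_order]
        constructor
        · intro d hd
          by_cases he0 : e = 0
          · rw [he0, mul_zero] at hd
            exact absurd hd ((not_lt_zero (a := d)))
          by_cases hsucc : ∃ e₀, e = e₀ + 1
          · obtain ⟨e₀, rfl⟩ := hsucc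
            have hxC : x = ω ^ (δ + 1) * e₀ + ω ^ δ * ω := by
              rw [hxeq, mul_add_one, opow_succ_eq]
            have hN : ∃ N : ℕ, d < ω ^ (δ + 1) * e₀ + ω ^ δ * (N : Ordinal) := by
              rcases lt_or_ge d (ω ^ (δ + 1) * e₀) with h | h
              · exact ⟨0, by simpa using h⟩
              · have h7 : d = ω ^ (δ + 1) * e₀ + (d - ω ^ (δ + 1) * e₀) :=
                  (Ordinal.add_sub_cancel_of_le h).symm
                have hd2 : d - ω ^ (δ + 1) * e₀ < ω ^ δ * ω := by
                  have hd3 := hd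
                  have h5 : ω ^ (δ + 1) * (e₀ + 1) = ω ^ (δ + 1) * e₀ + ω ^ δ * ω := by
                    rw [mul_add_one, opow_succ_eq]
                  rw [h5, h7] at hd3
                  exact (add_lt_add_iff_left _).1 hd3
                obtain ⟨n, hn⟩ := Ordinal.lt_omega0.1 ((Ordinal.div_lt (Wne δ)).2 hd2)
                refine ⟨n + 1, ?_⟩
                have h8 : d - ω ^ (δ + 1) * e₀ < ω ^ δ * ((n + 1 : ℕ) : Ordinal) := by
                  have h9 := Ordinal.lt_mul_succ_div (d - ω ^ (δ + 1) * e₀) (Wne δ)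
                  rw [hn] at h9
                  have h10 : (Order.succ (n : Ordinal)) = ((n + 1 : ℕ) : Ordinal) := by
                    rw [← Ordinal.add_one_eq_succ]; push_cast; rfl
                  rwa [h10] at h9
                rw [h7]
                exact add_lt_add_right h8 _
            obtain ⟨N, hdN⟩ := hN
            set M := (Finset.range (N + 1)).sup (fun j => φ.symm j) with hM
            have hMprop : ∀ m' : ℕ, M < m' → N ≤ φ m' := by
              intro m' hm'
              by_contra hcon
              push_neg at hcon
              have h5 : φ.symm (φ m') ≤ M :=
                Finset.le_sup (f := fun j => φ.symm j) (Finset.mem_range.2 (by omega))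
              rw [Equiv.symm_apply_apply] at h5
              omega
            have ha : ω ^ (δ + 1) * e₀ + ω ^ δ * ((M + 2 : ℕ) : Ordinal) < x := by
              rw [hxC]
              exact add_lt_add_right
                ((mul_lt_mul_iff_right₀ (Wpos δ)).2 (nat_lt_omega0 _)) _
            filter_upwards [Ioo_mem_nhds ha (hlt1 x)] with y hy
            rcases (hle1 hy.2).lt_or_eq with hylt | heq
            swap
            · rw [heq, hFx]; exact hd
            obtain ⟨e'', m'', η'', hη'', hyform, hFy⟩ := hyrep y ((hle1 hy.2).trans hx)
            have hb1 : ω ^ (δ + 1) * e'' ≤ y := by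
              rw [hyform]; exact rep_le_self δ e'' m'' η''
            have hb2 : y < ω ^ (δ + 1) * (e'' + 1) := by
              rw [hyform]; exact rep_lt δ e'' m'' hη''
            have hb3 : ω ^ (δ + 1) * e₀ ≤ y := le_trans (le_self_add) hy.1.le
            have hb4 : y < ω ^ (δ + 1) * (e₀ + 1) := by rw [← hxeq]; exact hylt
            have hee : e'' = e₀ := by
              have u1 := (mul_lt_mul_iff_right₀ (Apos δ)).1 (lt_of_le_of_lt hb1 hb4)
              have u2 := (mul_lt_mul_iff_right₀ (Apos δ)).1 (lt_of_le_of_lt hb3 hb2)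
              rw [Ordinal.add_one_eq_succ, Order.lt_succ_iff] at u1 u2
              exact le_antisymm u1 u2
            subst hee
            have hmge : M + 2 ≤ m'' := by
              by_contra hcon
              push_neg at hcon
              have hlt2 : ω ^ δ * (m'' : Ordinal) + η'' < ω ^ δ * ((M + 2 : ℕ) : Ordinal) := by
                calc ω ^ δ * (m'' : Ordinal) + η'' < ω ^ δ * ((m'' : Ordinal) + 1) := by
                      rw [mul_add_one]; exact add_lt_add_right hη'' _
                _ ≤ ω ^ δ * ((M + 2 : ℕ) : Ordinal) := by
                      refine (mul_le_mul_iff_right₀ (Wpos δ)).2 ?_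
                      exact_mod_cast (by omega : m'' + 1 ≤ M + 2)
              have h6 : y < ω ^ (δ + 1) * e'' + ω ^ δ * ((M + 2 : ℕ) : Ordinal) := by
                rw [hyform, add_assoc]
                exact add_lt_add_right hlt2 _
              exact absurd hy.1 (not_lt.2 h6.le)
            have hKge : N ≤ K m'' η'' := by
              by_cases hz : η'' = 0
              · simp only [hK]
                rw [if_pos hz, if_neg (show m'' ≠ 0 by omega)]
                have := hMprop (m'' - 1) (by omega)
                omega
              · simp only [hK]
                rw [if_neg hz]
                exact hMprop m'' (by omega)
            have hfin : ω ^ (δ + 1) * e'' + ω ^ δ * (N : Ordinal) ≤ F y := by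
              rw [hFy, add_assoc]
              refine add_le_add_right ?_ _
              calc ω ^ δ * (N : Ordinal) ≤ ω ^ δ * ((K m'' η'' : ℕ) : Ordinal) := by
                    refine (mul_le_mul_iff_right₀ (Wpos δ)).2 ?_
                    exact_mod_cast hKge
              _ ≤ _ := le_self_add
            exact lt_of_lt_of_le hdN hfin
          · -- e limit
            have he1 : d / ω ^ (δ + 1) < e := (Ordinal.div_lt (Apos δ).ne').2 hd
            have hd1 : d < ω ^ (δ + 1) * (d / ω ^ (δ + 1) + 1) := by
              have h5 := Ordinal.lt_mul_succ_div d (Apos δ).ne'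
              rwa [← Ordinal.add_one_eq_succ] at h5
            have he2 : d / ω ^ (δ + 1) + 1 < e := by
              rcases lt_or_eq_of_le (show d / ω ^ (δ + 1) + 1 ≤ e by
                rw [Ordinal.add_one_eq_succ, Order.succ_le_iff]; exact he1) with h | h
              · exact h
              · exact absurd ⟨_, h.symm⟩ hsucc
            have ha : ω ^ (δ + 1) * (d / ω ^ (δ + 1) + 1) < x := by
              rw [hxeq]
              exact (mul_lt_mul_iff_right₀ (Apos δ)).2 he2
            filter_upwards [Ioo_mem_nhds ha (hlt1 x)] with y hy
            rcases (hle1 hy.2).lt_or_eq with hylt | heq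
            swap
            · rw [heq, hFx]; exact hd
            obtain ⟨e'', m'', η'', hη'', hyform, hFy⟩ := hyrep y ((hle1 hy.2).trans hx)
            have hb2 : y < ω ^ (δ + 1) * (e'' + 1) := by
              rw [hyform]; exact rep_lt δ e'' m'' hη''
            have u2 : d / ω ^ (δ + 1) + 1 < e'' + 1 :=
              (mul_lt_mul_iff_right₀ (Apos δ)).1 (lt_trans hy.1 hb2)
            have u3 : d / ω ^ (δ + 1) + 1 ≤ e'' := by
              rw [Ordinal.add_one_eq_succ] at u2 ⊢
              rw [Ordinal.add_one_eq_succ] at u2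
              exact Order.succ_le_of_lt (Order.succ_lt_succ_iff.1 u2)
            calc d < ω ^ (δ + 1) * (d / ω ^ (δ + 1) + 1) := hd1
            _ ≤ ω ^ (δ + 1) * e'' := (mul_le_mul_iff_right₀ (Apos δ)).2 u3
            _ ≤ F y := by rw [hFy]; exact rep_le_self δ e'' (K m'' η'') η''
        · intro u hu
          filter_upwards [Iio_mem_nhds (hlt1 x)] with y hy
          have hy2 : y ≤ x := hle1 hy
          rcases hy2.lt_or_eq with hylt | heq
          · obtain ⟨e'', m'', η'', hη'', hyform, hFy⟩ := hyrep y (hy2.trans hx)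
            have h5 : ω ^ (δ + 1) * e'' ≤ y := by
              rw [hyform]; exact rep_le_self δ e'' m'' η''
            have h6 : e'' < e := by
              have h9 : y < ω ^ (δ + 1) * e := by rw [← hxeq]; exact hylt
              exact (mul_lt_mul_iff_right₀ (Apos δ)).1 (lt_of_le_of_lt h5 h9)
            have h7 : ω ^ (δ + 1) * (e'' + 1) ≤ ω ^ (δ + 1) * e :=
              (mul_le_mul_iff_right₀ (Apos δ)).2
                (by rwa [Ordinal.add_one_eq_succ, Order.succ_le_iff])
            have h8 : F y < ω ^ (δ + 1) * (e'' + 1) := by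
              rw [hFy]; exact rep_lt δ e'' (K m'' η'') hη''
            exact lt_trans (lt_of_lt_of_le h8 h7) hu
          · rw [heq, hFx]; exact hu
  -- assemble the homeomorphism
  haveI hcompact : CompactSpace (Set.Iic (ω ^ β)) := by
    rw [← isCompact_iff_compactSpace]
    have hIcc : Set.Iic (ω ^ β) = Set.Icc 0 (ω ^ β) := by
      ext z; simp [zero_le]
    rw [hIcc]
    exact isCompact_Icc
  set G : Set.Iic (ω ^ β) → Set.Iic (ω ^ β) :=
    fun z => ⟨F z, hFmem z z.2⟩ with hG
  have hGinj : Function.Injective G := by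
    intro a b hab
    have h5 : F ↑a = F ↑b := Subtype.ext_iff.1 hab
    rw [hFeq a.2, hFeq b.2] at h5
    exact Subtype.ext (hinj _ _ a.2 b.2 h5)
  have hGsurj : Function.Surjective G := by
    intro b
    obtain ⟨x, hx1, hx2⟩ := hsurj ↑b b.2
    refine ⟨⟨x, hx1⟩, Subtype.ext ?_⟩
    show F x = ↑b
    rw [hFeq hx1]
    exact hx2
  have hGcont : Continuous G :=
    Continuous.subtype_mk (hcont.comp continuous_subtype_val) _
  have hEcont : Continuous (Equiv.ofBijective G ⟨hGinj, hGsurj⟩ : Set.Iic (ω ^ β) → Set.Iic (ω ^ β)) := hGcont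
  refine ⟨Continuous.homeoOfEquivCompactToT2 hEcont, ?_⟩
  intro x
  show ((Equiv.ofBijective G ⟨hGinj, hGsurj⟩) x : Ordinal) = f ↑x
  show F ↑x = f ↑x
  exact hFeq x.2
end
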